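/- Let T̃ : ℝ² → ℝ be continuously differentiable with compact support, let φ : ℝ² → ℝ be twice continuously differentiable with bounded gradient ∇φ, and fix k, l ∈ ℝ². For z ∈ ℂ define the real-valued perturbation φ_z(x) = z e^{i x·l} + conj(z) e^{−i x·l}, and define G : ℂ → ℂ by G(z) = (2π)⁻¹ ∫_{ℝ²} e^{−i k·x} T̃(x − ∇φ(x) − ∇φ_z(x)) dx. Define A^q(x) = (∂T̃/∂x_q)(x − ∇φ(x)) for q = 1, 2. Then the Wirtinger-type derivative (∂/∂(re z) + i ∂/∂(im z)) G evaluated at z = 0 equals 2 Σ_{q=1,2} i l_q Â^q(k+l), where Â^q is the Fourier transform of A^q. -/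

import Mathlib

open MeasureTheory
open scoped RealInnerProductSpace

noncomputable section

/-- `ℝ²` as a Euclidean (inner product) space. -/
abbrev E2 := EuclideanSpace ℝ (Fin 2)

/-- The Fourier transform with the paper's normalization:
`f̂(l) = (2π)⁻¹ ∫ e^{-i x·l} f(x) dx`. -/
noncomputable def ft (f : E2 → ℂ) (l : E2) : ℂ :=
  (2 * Real.pi)⁻¹ • ∫ x : E2, Complex.exp (-(Complex.I * (⟪x, l⟫ : ℂ))) * f x

/-- Fourier transform of a real-valued function. -/
noncomputable def ftR (f : E2 → ℝ) (l : E2) : ℂ := ft (fun x => (f x : ℂ)) l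

/-- The `q`-th partial derivative of `f : ℝ² → ℝ`. -/
noncomputable def pderiv2 (q : Fin 2) (f : E2 → ℝ) (x : E2) : ℝ :=
  fderiv ℝ f x (EuclideanSpace.single q 1)

/-- The anti-lensed gradient field `A^q(x) = (∂T/∂x_q)(x - ∇φ(x))`. -/
noncomputable def Aq (T φ : E2 → ℝ) (q : Fin 2) (x : E2) : ℝ :=
  pderiv2 q T (x - gradient φ x)

/-- The real-valued perturbation `φ_z(x) = z e^{i x·l} + conj(z) e^{-i x·l}`. -/
noncomputable def pert (l : E2) (z : ℂ) (x : E2) : ℝ :=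
  (z * Complex.exp (Complex.I * (⟪x, l⟫ : ℂ)) +
    (starRingEnd ℂ) z * Complex.exp (-(Complex.I * (⟪x, l⟫ : ℂ)))).re

/-- The perturbed anti-lensed Fourier coefficient
`G(z) = (2π)⁻¹ ∫ e^{-i k·x} T̃(x - ∇φ(x) - ∇φ_z(x)) dx`. -/
noncomputable def Gfun (T φ : E2 → ℝ) (k l : E2) (z : ℂ) : ℂ :=
  (2 * Real.pi)⁻¹ • ∫ x : E2,
    Complex.exp (-(Complex.I * (⟪x, k⟫ : ℂ))) *
      ((T (x - gradient φ x - gradient (pert l z) x) : ℝ) : ℂ)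

/-! The gradient of `φ_z` is `-2 Im(z e^{i x·l}) • l`, which is real-linear in `z`: along
`z = t w` the lensing map becomes `x - ∇φ(x) + t h_w(x)` with `h_w` bounded. Since `T̃` has
compact support and `∇φ` is bounded, all integrands live in one fixed ball, so we may
differentiate under the integral sign. The directions `w = 1` and `w = i` give the weights
`2 sin(x·l)` and `2 cos(x·l)`, and `sin θ + i cos θ = i e^{-iθ}` shifts the frequency from `k`
to `k + l`; expanding `∂_l T̃ = Σ_q l_q ∂_q T̃` produces the Fourier transforms of the `A^q`. -/

open Metric

section CompactSupport

variable {E β : Type*} [SeminormedAddCommGroup E] [Zero β]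

theorem HasCompactSupport.exists_forall_notMem_tsupport {f : E → β} (hf : HasCompactSupport f)
    (M : ℝ) : ∃ R, ∀ x y : E, R < ‖x‖ → ‖y - x‖ ≤ M → y ∉ tsupport f := by
  obtain ⟨R, hR⟩ := hf.isBounded.subset_closedBall (0 : E)
  refine ⟨R + M, fun x y hx hy hmem => ?_⟩
  have hyR := mem_closedBall_zero_iff.1 (hR hmem)
  linarith [norm_le_norm_add_norm_sub' x y, norm_sub_rev x y]

theorem HasCompactSupport.comp_of_norm_sub_le [ProperSpace E] {f : E → β}
    (hf : HasCompactSupport f) {q : E → E} {M : ℝ} (hq : ∀ x, ‖q x - x‖ ≤ M) :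
    HasCompactSupport (f ∘ q) := by
  obtain ⟨R, hR⟩ := hf.exists_forall_notMem_tsupport M
  refine HasCompactSupport.intro (isCompact_closedBall 0 R) fun x hx => ?_
  exact image_eq_zero_of_notMem_tsupport (f := f) (hR x (q x) (by simpa using hx) (hq x))

end CompactSupport

section ParametricIntegral

variable {E : Type*} [NormedAddCommGroup E] [ProperSpace E] [MeasurableSpace E] [BorelSpace E]
  {μ : Measure E} {e : E → ℂ}

theorem MeasureTheory.LocallyIntegrable.integrable_mul_comp_of_norm_sub_le
    (he : LocallyIntegrable e μ) {f : E → ℝ} (hf : Continuous f) (hfc : HasCompactSupport f) {q : E → E} (hq : Continuous q)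
    {M : ℝ} (hqM : ∀ x, ‖q x - x‖ ≤ M) : Integrable (fun x => e x * f (q x)) μ :=
  he.integrable_smul_right_of_hasCompactSupport (Complex.continuous_ofReal.comp (hf.comp hq))
    ((hfc.comp_of_norm_sub_le hqM).comp_left Complex.ofReal_zero)

variable [NormedSpace ℝ E]

theorem hasDerivAt_integral_mul_comp_add_smul (he : LocallyIntegrable e μ) {T : E → ℝ}
    (hT : ContDiff ℝ 1 T) (hTc : HasCompactSupport T) {p h : E → E} (hp : Continuous p)
    (hh : Continuous h) {M H : ℝ} (hpM : ∀ x, ‖p x - x‖ ≤ M) (hhH : ∀ x, ‖h x‖ ≤ H) :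
    Integrable (fun x => e x * fderiv ℝ T (p x) (h x)) μ ∧
      HasDerivAt (fun t : ℝ => ∫ x, e x * T (p x + t • h x) ∂μ)
        (∫ x, e x * fderiv ℝ T (p x) (h x) ∂μ) 0 := by
  have hq : ∀ t : ℝ, |t| ≤ 1 → ∀ x, ‖(p x + t • h x) - x‖ ≤ M + H := fun t ht x =>
    calc ‖(p x + t • h x) - x‖ ≤ ‖p x - x‖ + |t| * ‖h x‖ := by
          rw [add_sub_right_comm, ← Real.norm_eq_abs, ← norm_smul]; exact norm_add_le _ _
      _ ≤ M + 1 * H := by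
          gcongr
          exacts [hpM x, hhH x]
      _ = M + H := by ring
  obtain ⟨R, hR⟩ := hTc.exists_forall_notMem_tsupport (M + H)
  have hT' : Continuous (fderiv ℝ T) := hT.continuous_fderiv one_ne_zero
  obtain ⟨C, hC⟩ := hT'.bounded_above_of_compact_support (hTc.fderiv (𝕜 := ℝ))
  have hderiv : ∀ x t, HasDerivAt (fun s : ℝ => e x * T (p x + s • h x))
      (e x * fderiv ℝ T (p x + t • h x) (h x)) t := by
    intro x t
    have hline : HasDerivAt (fun s : ℝ => p x + s • h x) (h x) t := by
      simpa using ((hasDerivAt_id t).smul_const (h x)).const_add (p x)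
    have := ((hT.differentiable one_ne_zero _).hasFDerivAt.comp_hasDerivAt t hline).ofReal_comp
    exact this.const_mul (e x)
  have hbound : ∀ x, ∀ t ∈ ball (0 : ℝ) 1, ‖e x * fderiv ℝ T (p x + t • h x) (h x)‖ ≤
      (closedBall 0 R).indicator (fun x => ‖e x‖ * (C * H)) x := by
    intro x t ht
    have ht : |t| ≤ 1 := by simpa using (mem_ball_zero_iff.1 ht).le
    by_cases hx : x ∈ closedBall 0 R
    · rw [Set.indicator_of_mem hx, norm_mul, Complex.norm_real]
      gcongr
      exact (ContinuousLinearMap.le_opNorm _ _).trans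
        (mul_le_mul (hC _) (hhH x) (norm_nonneg _) ((norm_nonneg _).trans (hC 0)))
    · rw [Set.indicator_of_notMem hx, fderiv_of_notMem_tsupport _
        (hR x _ (by simpa using hx) (hq t ht x))]
      simp
  have := hasDerivAt_integral_of_dominated_loc_of_deriv_le (μ := μ) (x₀ := 0)
    (F := fun t x => e x * T (p x + t • h x))
    (F' := fun t x => e x * fderiv ℝ T (p x + t • h x) (h x)) (ball_mem_nhds 0 one_pos)
    (Filter.Eventually.of_forall fun t => he.aestronglyMeasurable.mul
      (by fun_prop : Continuous fun x => (T (p x + t • h x) : ℂ)).aestronglyMeasurable)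
    (by simpa using he.integrable_mul_comp_of_norm_sub_le hT.continuous hTc hp hpM)
    (he.aestronglyMeasurable.mul (by fun_prop :
      Continuous fun x => (fderiv ℝ T (p x + (0 : ℝ) • h x) (h x) : ℂ)).aestronglyMeasurable)
    (Filter.Eventually.of_forall hbound)
    ((integrable_indicator_iff measurableSet_closedBall).2
      ((he.integrableOn_isCompact (isCompact_closedBall 0 R)).norm.mul_const _))
    (Filter.Eventually.of_forall fun x t _ => hderiv x t)
  simpa using this

end ParametricIntegral

section Gradient

variable {F : Type*} [NormedAddCommGroup F] [InnerProductSpace ℝ F] [CompleteSpace F]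

theorem ContDiff.continuous_gradient {f : F → ℝ} {n : WithTop ℕ∞} (hf : ContDiff ℝ n f)
    (hn : n ≠ 0) : Continuous (gradient f) :=
  (InnerProductSpace.toDual ℝ F).symm.continuous.comp (hf.continuous_fderiv hn)

theorem HasDerivAt.hasGradientAt_comp_inner {P : ℝ → ℝ} {P' : ℝ} {l x : F}
    (hP : HasDerivAt P P' ⟪x, l⟫) : HasGradientAt (fun y => P ⟪y, l⟫) (P' • l) x := by
  rw [hasGradientAt_iff_hasFDerivAt]
  have hinner : HasFDerivAt (fun y : F => ⟪y, l⟫) (innerSL ℝ l) x := by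
    convert (innerSL ℝ l).hasFDerivAt using 1
    ext y
    exact real_inner_comm l y
  refine (hP.comp_hasFDerivAt x hinner).congr_fderiv ?_
  ext v
  simp

end Gradient

theorem Complex.sin_add_I_mul_cos (z : ℂ) :
    Complex.sin z + Complex.I * Complex.cos z = Complex.I * Complex.exp (-(Complex.I * z)) := by
  rw [show -(Complex.I * z) = -z * Complex.I by ring, Complex.exp_mul_I, Complex.cos_neg,
    Complex.sin_neg]
  linear_combination Complex.sin z * Complex.I_mul_I

theorem pert_apply (l : E2) (z : ℂ) (x : E2) :
    pert l z x = 2 * (z.re * Real.cos ⟪x, l⟫ - z.im * Real.sin ⟪x, l⟫) := by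
  simp [pert, Complex.exp_re, Complex.exp_im, Complex.mul_re, Complex.mul_im]
  ring

theorem gradient_pert (l : E2) (z : ℂ) (x : E2) :
    gradient (pert l z) x = -(2 * (z.re * Real.sin ⟪x, l⟫ + z.im * Real.cos ⟪x, l⟫)) • l := by
  have hP : HasDerivAt (fun θ => 2 * (z.re * Real.cos θ - z.im * Real.sin θ))
      (-(2 * (z.re * Real.sin ⟪x, l⟫ + z.im * Real.cos ⟪x, l⟫))) ⟪x, l⟫ := by
    refine ((((Real.hasDerivAt_cos _).const_mul z.re).sub
      ((Real.hasDerivAt_sin _).const_mul z.im)).const_mul 2).congr_deriv ?_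
    ring
  exact (funext (pert_apply l z) ▸ hP.hasGradientAt_comp_inner).gradient

theorem gradient_pert_ofReal_mul (l : E2) (t : ℝ) (w : ℂ) (x : E2) :
    gradient (pert l (t * w)) x = t • gradient (pert l w) x := by
  simp only [gradient_pert, smul_smul, Complex.re_ofReal_mul, Complex.im_ofReal_mul]
  exact congrArg (· • l) (by ring)

theorem continuous_gradient_pert (l : E2) (w : ℂ) : Continuous (gradient (pert l w)) := by
  simp only [funext (gradient_pert l w)]
  fun_prop

theorem norm_gradient_pert_le (l : E2) (w : ℂ) (x : E2) :
    ‖gradient (pert l w) x‖ ≤ 2 * (|w.re| + |w.im|) * ‖l‖ := by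
  rw [gradient_pert, norm_smul, norm_neg, Real.norm_eq_abs, abs_mul, abs_two]
  gcongr 2 * ?_ * _
  calc |w.re * Real.sin ⟪x, l⟫ + w.im * Real.cos ⟪x, l⟫|
      ≤ |w.re| * |Real.sin ⟪x, l⟫| + |w.im| * |Real.cos ⟪x, l⟫| := by
        rw [← abs_mul, ← abs_mul]; exact abs_add_le _ _
    _ ≤ |w.re| * 1 + |w.im| * 1 := by
        gcongr
        exacts [Real.abs_sin_le_one _, Real.abs_cos_le_one _]
    _ = |w.re| + |w.im| := by ring

theorem hasDerivAt_Gfun_ofReal_mul {T φ : E2 → ℝ} (hT : ContDiff ℝ 1 T)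
    (hTc : HasCompactSupport T) (hφ : ContDiff ℝ 2 φ) {Mφ : ℝ}
    (hbφ : ∀ x, ‖gradient φ x‖ ≤ Mφ) (k l : E2) (w : ℂ) :
    Integrable (fun x : E2 => Complex.exp (-(Complex.I * (⟪x, k⟫ : ℂ))) *
        fderiv ℝ T (x - gradient φ x) (-gradient (pert l w) x)) ∧
      HasDerivAt (fun t : ℝ => Gfun T φ k l (t * w))
        ((2 * Real.pi)⁻¹ • ∫ x : E2, Complex.exp (-(Complex.I * (⟪x, k⟫ : ℂ))) *
          fderiv ℝ T (x - gradient φ x) (-gradient (pert l w) x)) 0 := by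
  have hGfun : (fun t : ℝ => Gfun T φ k l (t * w)) = fun t : ℝ => (2 * Real.pi)⁻¹ •
      ∫ x : E2, Complex.exp (-(Complex.I * (⟪x, k⟫ : ℂ))) *
        T ((x - gradient φ x) + t • -gradient (pert l w) x) := by
    funext t
    simp only [Gfun, gradient_pert_ofReal_mul, smul_neg, ← sub_eq_add_neg]
  obtain ⟨hint, hderiv⟩ := hasDerivAt_integral_mul_comp_add_smul (μ := volume)
    (p := fun x => x - gradient φ x) (h := fun x => -gradient (pert l w) x)
    (by fun_prop :
      Continuous fun x : E2 => Complex.exp (-(Complex.I * (⟪x, k⟫ : ℂ)))).locallyIntegrable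
    hT hTc (continuous_id.sub (hφ.continuous_gradient two_ne_zero))
    (continuous_gradient_pert l w).neg (fun x => by simpa using hbφ x)
    (fun x => (norm_neg (gradient (pert l w) x)).trans_le (norm_gradient_pert_le l w x))
  rw [hGfun]
  exact ⟨hint, hderiv.const_smul ((2 * Real.pi)⁻¹ : ℝ)⟩

theorem fderiv_apply_eq_sum_mul_pderiv2 (T : E2 → ℝ) (y v : E2) :
    fderiv ℝ T y v = ∑ q, v q * pderiv2 q T y := by
  conv_lhs => rw [← (EuclideanSpace.basisFun (Fin 2) ℝ).sum_repr v]
  simp [pderiv2]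

theorem sum_mul_ftR_Aq {T φ : E2 → ℝ} (hT : ContDiff ℝ 1 T) (hTc : HasCompactSupport T)
    (hφ : ContDiff ℝ 2 φ) {Mφ : ℝ} (hbφ : ∀ x, ‖gradient φ x‖ ≤ Mφ) (v ξ : E2) :
    ∑ q, (v q : ℂ) * ftR (Aq T φ q) ξ = (2 * Real.pi)⁻¹ • ∫ x : E2,
      Complex.exp (-(Complex.I * (⟪x, ξ⟫ : ℂ))) * fderiv ℝ T (x - gradient φ x) v := by
  have hint : ∀ q, Integrable fun x : E2 =>
      Complex.exp (-(Complex.I * (⟪x, ξ⟫ : ℂ))) * (Aq T φ q x : ℂ) := fun q =>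
    (by fun_prop : Continuous fun x : E2 => Complex.exp (-(Complex.I * (⟪x, ξ⟫ : ℂ))))
      |>.locallyIntegrable.integrable_mul_comp_of_norm_sub_le
        ((hT.continuous_fderiv one_ne_zero).clm_apply continuous_const) (hTc.fderiv_apply ℝ _)
        (continuous_id.sub (hφ.continuous_gradient two_ne_zero)) (fun x => by simpa using hbφ x)
  simp only [ftR, ft, mul_smul_comm, ← Finset.smul_sum, ← integral_const_mul]
  rw [← integral_finsetSum _ fun q _ => (hint q).const_mul _]
  congr 1
  refine integral_congr_ae (.of_forall fun x => ?_)
  simp only [Aq, fderiv_apply_eq_sum_mul_pderiv2 T _ v, Complex.ofReal_sum, Complex.ofReal_mul,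
    Finset.mul_sum]
  exact Finset.sum_congr rfl fun q _ => by ring

/-- Lemma "partialconj", first equation: the Wirtinger-type derivative
`(∂/∂(re z) + i ∂/∂(im z)) G` at `z = 0` equals `2 ∑_q i l_q Â^q(k+l)`. -/
theorem stmt7 (T : E2 → ℝ) (hT : ContDiff ℝ 1 T) (hTc : HasCompactSupport T)
    (φ : E2 → ℝ) (hφ : ContDiff ℝ 2 φ)
    (Mφ : ℝ) (hbφ : ∀ x, ‖gradient φ x‖ ≤ Mφ)
    (k l : E2) :
    deriv (fun t : ℝ => Gfun T φ k l (t : ℂ)) 0 +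
        Complex.I * deriv (fun t : ℝ => Gfun T φ k l ((t : ℂ) * Complex.I)) 0
      = 2 * ∑ q : Fin 2, Complex.I * ((l q : ℝ) : ℂ) * ftR (Aq T φ q) (k + l) := by
  obtain ⟨hint₁, hd₁⟩ := hasDerivAt_Gfun_ofReal_mul hT hTc hφ hbφ k l 1
  obtain ⟨hintI, hdI⟩ := hasDerivAt_Gfun_ofReal_mul hT hTc hφ hbφ k l Complex.I
  simp only [mul_one] at hd₁
  have hRHS : 2 * ∑ q : Fin 2, Complex.I * ((l q : ℝ) : ℂ) * ftR (Aq T φ q) (k + l) =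
      2 * Complex.I * ∑ q : Fin 2, (l q : ℂ) * ftR (Aq T φ q) (k + l) := by
    simp only [mul_assoc, Finset.mul_sum]
  rw [hd₁.deriv, hdI.deriv, hRHS, sum_mul_ftR_Aq hT hTc hφ hbφ, mul_smul_comm, mul_smul_comm,
    ← smul_add, ← integral_const_mul, ← integral_const_mul,
    ← integral_add hint₁ (hintI.const_mul _)]
  congr 1
  refine integral_congr_ae (.of_forall fun x => ?_)
  have hexp : Complex.exp (-(Complex.I * (⟪x, k + l⟫ : ℂ))) =
      Complex.exp (-(Complex.I * ⟪x, k⟫)) * Complex.exp (-(Complex.I * ⟪x, l⟫)) := by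
    rw [← Complex.exp_add, inner_add_right]
    push_cast
    ring_nf
  dsimp only
  rw [hexp, gradient_pert, gradient_pert]
  simp only [neg_smul, neg_neg, map_smul, smul_eq_mul, Complex.one_re, Complex.one_im,
    Complex.I_re, Complex.I_im]
  push_cast
  linear_combination (2 * Complex.exp (-(Complex.I * ⟪x, k⟫)) * fderiv ℝ T (x - gradient φ x) l) *
    Complex.sin_add_I_mul_cos ⟪x, l⟫
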